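/- arXiv:1103.3984 — 2 statements merged into one kernel-verified Lean document; each statement's English description precedes it below -/
import Mathlib

section
/- Let n ≥ 1, let q_1, …, q_n ∈ ℂ[z] with q_i(0) = 0, and let p ∈ ℂ[z] with p(0) = 0, p(z) ≠ z, and deg p ≥ 2. Let χ_1, …, χ_n ∈ ℂ[[z]] be the unique power series solutions with χ_i(0) = 0 of χ_i(z) = χ_i(p(z)) + q_i(z). Suppose 1, q_1, …, q_n are linearly independent over ℂ and that for every (s_1,…,s_n) ∈ ℂ^n \ {0} the degree of Σ s_i q_i is not divisible by deg p. Then for every (s_1,…,s_n) ∈ ℂ^n \ {0}, the power series Σ_{i=1}^n s_i χ_i is not a polynomial. -/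
/-!
If `∑ sᵢ χᵢ` were a polynomial `P`, the functional equations would give
`∑ sᵢ qᵢ = P - P ∘ p`. Since `deg p ≥ 2`, the right-hand side is either `0` (for constant `P`)
or has degree `deg P · deg p`; in both cases its degree is divisible by `deg p`.
-/

open PowerSeries Finset

/-- Composition `f ∘ g` of formal power series, defined coefficientwise; this agrees with
the usual substitution when `g` has zero constant coefficient. -/
noncomputable def psComp (f g : PowerSeries ℂ) : PowerSeries ℂ :=
  PowerSeries.mk fun n => ∑ k ∈ Finset.range (n + 1), (coeff k f) * (coeff n (g ^ k))

namespace Polynomial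

variable {R : Type*}

theorem coeff_pow_eq_zero_of_lt [CommSemiring R] {p : R[X]} (hp : p.coeff 0 = 0) {m k : ℕ}
    (hmk : m < k) : (p ^ k).coeff m = 0 :=
  X_pow_dvd_iff.mp (pow_dvd_pow_of_dvd (X_dvd_iff.mpr hp) k) m hmk

theorem natDegree_sub_comp [CommRing R] [NoZeroDivisors R] {P p : R[X]}
    (hP : 0 < P.natDegree) (hp : 1 < p.natDegree) :
    (P - P.comp p).natDegree = P.natDegree * p.natDegree := by
  have hlt : P.natDegree < (P.comp p).natDegree := by
    rw [natDegree_comp]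
    exact lt_mul_right hP hp
  rw [natDegree_sub_eq_right_of_natDegree_lt hlt, natDegree_comp]

theorem natDegree_dvd_natDegree_sub_comp [CommRing R] [NoZeroDivisors R] (P : R[X]) {p : R[X]}
    (hp : 1 < p.natDegree) : p.natDegree ∣ (P - P.comp p).natDegree := by
  rcases Nat.eq_zero_or_pos P.natDegree with hP | hP
  · rw [eq_C_of_natDegree_eq_zero hP, C_comp, sub_self, natDegree_zero]
    exact dvd_zero _
  · rw [natDegree_sub_comp hP hp]
    exact dvd_mul_left _ _

end Polynomial

theorem psComp_coe {p : Polynomial ℂ} (hp : p.coeff 0 = 0) (P : Polynomial ℂ) :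
    psComp (P : PowerSeries ℂ) (p : PowerSeries ℂ) = ((P.comp p : Polynomial ℂ) : PowerSeries ℂ) := by
  ext m
  set N := max P.natDegree m + 1
  rw [psComp, coeff_mk, Polynomial.coeff_coe, Polynomial.comp,
    Polynomial.eval₂_eq_sum_range' Polynomial.C (by omega : P.natDegree < N),
    Polynomial.finsetSum_coeff]
  simp only [Polynomial.coeff_C_mul, ← Polynomial.coe_pow, Polynomial.coeff_coe]
  refine Finset.sum_subset (range_subset_range.mpr (by omega : m + 1 ≤ N)) fun k _ hk => ?_
  rw [Polynomial.coeff_pow_eq_zero_of_lt hp (by simpa using hk), mul_zero]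

theorem psComp_sum_C_mul {ι : Type*} (t : Finset ι) (s : ι → ℂ) (f : ι → PowerSeries ℂ)
    (g : PowerSeries ℂ) :
    psComp (∑ i ∈ t, C (s i) * f i) g = ∑ i ∈ t, C (s i) * psComp (f i) g := by
  ext m
  simp only [psComp, coeff_mk, map_sum, coeff_C_mul, Finset.sum_mul, Finset.mul_sum, mul_assoc]
  exact Finset.sum_comm

theorem stmt4_general (n : ℕ) (p : Polynomial ℂ) (q : Fin n → Polynomial ℂ)
    (hp0 : p.eval 0 = 0)
    (hpd : 2 ≤ p.natDegree)
    (χ : Fin n → PowerSeries ℂ)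
    (hχ : ∀ i, χ i = psComp (χ i) (p : PowerSeries ℂ) + ((q i : Polynomial ℂ) : PowerSeries ℂ))
    (hdvd : ∀ s : Fin n → ℂ, s ≠ 0 → ¬ p.natDegree ∣ (∑ i, s i • q i).natDegree) :
    ∀ s : Fin n → ℂ, s ≠ 0 →
      ¬ ∃ P : Polynomial ℂ, (∑ i, (PowerSeries.C (s i)) * χ i) = (P : PowerSeries ℂ) := by
  intro s hs ⟨P, hP⟩
  have hp : p.coeff 0 = 0 := by rwa [Polynomial.coeff_zero_eq_eval_zero]
  have hfun : (P : PowerSeries ℂ) = ((P.comp p + ∑ i, s i • q i : Polynomial ℂ) : PowerSeries ℂ) :=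
    calc (P : PowerSeries ℂ) = ∑ i, C (s i) * χ i := hP.symm
      _ = ∑ i, C (s i) * (psComp (χ i) p + q i) := Finset.sum_congr rfl fun i _ => by rw [← hχ i]
      _ = psComp (∑ i, C (s i) * χ i) p + ∑ i, C (s i) * (q i : PowerSeries ℂ) := by
        simp only [psComp_sum_C_mul, mul_add, Finset.sum_add_distrib]
      _ = _ := by
        rw [hP, psComp_coe hp, Polynomial.coe_add,
          ← Polynomial.coeToPowerSeries.ringHom_apply (φ := ∑ i, s i • q i), map_sum]
        simp only [Polynomial.coeToPowerSeries.ringHom_apply, Polynomial.coe_smul, smul_eq_C_mul]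
  have hQ : ∑ i, s i • q i = P - P.comp p :=
    eq_sub_of_add_eq' (Polynomial.coe_inj.mp hfun).symm
  exact hdvd s hs (hQ ▸ P.natDegree_dvd_natDegree_sub_comp hpd)

/-- Under condition (1) of the lemma (every nontrivial linear combination of the `qᵢ` has
degree not divisible by `deg p`), every nontrivial linear combination of the solutions
`χᵢ` of `χᵢ(z) = χᵢ(p(z)) + qᵢ(z)` is not a polynomial. -/
theorem stmt4 (n : ℕ) (hn : 1 ≤ n) (p : Polynomial ℂ) (q : Fin n → Polynomial ℂ)
    (hq0 : ∀ i, (q i).eval 0 = 0) (hp0 : p.eval 0 = 0) (hpX : p ≠ Polynomial.X)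
    (hpd : 2 ≤ p.natDegree)
    (χ : Fin n → PowerSeries ℂ)
    (hχ0 : ∀ i, constantCoeff (χ i) = 0)
    (hχ : ∀ i, χ i = psComp (χ i) (p : PowerSeries ℂ) + ((q i : Polynomial ℂ) : PowerSeries ℂ))
    (hli : LinearIndependent ℂ (Fin.cons (1 : Polynomial ℂ) q : Fin (n + 1) → Polynomial ℂ))
    (hdvd : ∀ s : Fin n → ℂ, s ≠ 0 → ¬ p.natDegree ∣ (∑ i, s i • q i).natDegree) :
    ∀ s : Fin n → ℂ, s ≠ 0 →
      ¬ ∃ P : Polynomial ℂ, (∑ i, (PowerSeries.C (s i)) * χ i) = (P : PowerSeries ℂ) :=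
  stmt4_general n p q hp0 hpd χ hχ hdvd
end

section
/- Let p ∈ ℂ[z] with p(0) = 0, deg p = d ≥ 2, and let q ∈ ℂ[z] with q(0) = 0 and deg q ≥ 1 such that d ∤ deg q. Then the unique power series solution χ ∈ ℂ[[z]] with χ(0) = 0 of χ(z) = χ(p(z)) + q(z) is not a rational function. -/
/-!
Clearing the denominator of `χ = a / b` and substituting `p` into `b χ = a` turns the functional
equation into the polynomial identity `(b ∘ p) a - b (a ∘ p) = (b ∘ p) b q`. Comparing degrees,
with `A = deg a`, `B = deg b`, `Q = deg q`: if `A ≤ B` the left side has degree at most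
`B d + B < B d + B + Q`, and if `A > B` its leading term is that of `b (a ∘ p)`, so
`B + A d = B d + B + Q`, i.e. `Q = (A - B) d`.
-/

open PowerSeries Finset

theorem psComp_eq_subst (f : PowerSeries ℂ) {g : PowerSeries ℂ} (hg : constantCoeff g = 0) :
    psComp f g = f.subst g := by
  ext n
  rw [psComp, coeff_mk, coeff_subst' (HasSubst.of_constantCoeff_zero' hg)]
  refine (finsum_eq_sum_of_support_subset _ fun k hk => ?_).symm
  rw [coe_range, Set.mem_Iio, Nat.lt_succ_iff]
  by_contra! hnk
  refine hk ?_
  show coeff k f * coeff n (g ^ k) = 0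
  rw [coeff_of_lt_order n ((Nat.cast_lt.2 hnk).trans_le
    (le_order_pow_of_constantCoeff_eq_zero k hg)), mul_zero]

namespace Polynomial

variable {R : Type*} [CommRing R]

theorem hasSubst_coe {p : R[X]} (hp : p.coeff 0 = 0) : HasSubst (p : R⟦X⟧) :=
  HasSubst.of_constantCoeff_zero' (by rwa [constantCoeff_coe])

theorem subst_coe_eq_comp {p : R[X]} (hp : p.coeff 0 = 0) (u : R[X]) :
    (u : R⟦X⟧).subst (p : R⟦X⟧) = (u.comp p : R⟦X⟧) := by
  rw [subst_coe (hasSubst_coe hp), comp_eq_aeval]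
  exact aeval_algHom_apply (coeToPowerSeries.algHom R) p u

theorem comp_mul_sub_mul_comp_eq {p q a b : R[X]} {χ : R⟦X⟧} (hp : p.coeff 0 = 0)
    (hχ : χ = χ.subst (p : R⟦X⟧) + q) (hab : b * χ = a) :
    b.comp p * a - b * a.comp p = b.comp p * b * q := by
  have hcomp : (b.comp p : R⟦X⟧) * χ.subst (p : R⟦X⟧) = a.comp p := by
    rw [← subst_coe_eq_comp hp, ← subst_coe_eq_comp hp, ← subst_mul (hasSubst_coe hp), hab]
  apply coe_injective (R := R)
  push_cast
  rw [← hab, ← hcomp]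
  nth_rewrite 1 [hχ]
  ring

theorem comp_ne_zero [IsDomain R] {p u : R[X]} (hu : u ≠ 0) (hp : 0 < p.natDegree) :
    u.comp p ≠ 0 := fun h => by
  rcases comp_eq_zero_iff.1 h with hu0 | ⟨-, hpC⟩
  · exact hu hu0
  · rw [hpC, natDegree_C] at hp
    exact hp.false

theorem natDegree_dvd_of_comp_mul_sub_mul_comp_eq [IsDomain R] {p q a b : R[X]}
    (hp : 2 ≤ p.natDegree) (hb : b ≠ 0) (hq : q ≠ 0)
    (h : b.comp p * a - b * a.comp p = b.comp p * b * q) :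
    p.natDegree ∣ q.natDegree := by
  rcases Nat.eq_zero_or_pos q.natDegree with hq0 | hq0
  · exact hq0 ▸ dvd_zero _
  have hbp : b.comp p ≠ 0 := comp_ne_zero hb (by omega)
  have hrhs : (b.comp p * b * q).natDegree =
      b.natDegree * p.natDegree + b.natDegree + q.natDegree := by
    rw [natDegree_mul (mul_ne_zero hbp hb) hq, natDegree_mul hbp hb, natDegree_comp]
  have hleft : (b.comp p * a).natDegree ≤ b.natDegree * p.natDegree + a.natDegree :=
    natDegree_mul_le.trans (by rw [natDegree_comp])
  rcases le_or_gt a.natDegree b.natDegree with hab | hab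
  · have hright : (b * a.comp p).natDegree ≤ b.natDegree + a.natDegree * p.natDegree :=
      natDegree_mul_le.trans (by rw [natDegree_comp])
    have hsub := h ▸ natDegree_sub_le (b.comp p * a) (b * a.comp p)
    have := Nat.mul_le_mul_right p.natDegree hab
    omega
  · have hright : (b * a.comp p).natDegree = b.natDegree + a.natDegree * p.natDegree := by
      rw [natDegree_mul hb (comp_ne_zero (ne_zero_of_natDegree_gt hab) (by omega)),
        natDegree_comp]
    have hlt : b.natDegree * p.natDegree + a.natDegree <
        b.natDegree + a.natDegree * p.natDegree := by
      nlinarith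
    have hsub := h ▸ natDegree_sub_eq_right_of_natDegree_lt (hleft.trans_lt (hright ▸ hlt))
    refine ⟨a.natDegree - b.natDegree, ?_⟩
    rw [Nat.mul_sub, mul_comm, mul_comm p.natDegree]
    omega

end Polynomial

theorem stmt11_general (p q : Polynomial ℂ) (d : ℕ) (hp0 : p.eval 0 = 0)
    (hd : p.natDegree = d) (hd2 : 2 ≤ d)
    (hq1 : 1 ≤ q.natDegree) (hdvd : ¬ d ∣ q.natDegree)
    (χ : PowerSeries ℂ)
    (hχ : χ = psComp χ (p : PowerSeries ℂ) + (q : PowerSeries ℂ)) :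
    ¬ ∃ a b : Polynomial ℂ, b ≠ 0 ∧ (b : PowerSeries ℂ) * χ = (a : PowerSeries ℂ) := by
  rintro ⟨a, b, hb, hab⟩
  have hp : p.coeff 0 = 0 := by rwa [Polynomial.coeff_zero_eq_eval_zero]
  have hq : q ≠ 0 := Polynomial.ne_zero_of_natDegree_gt hq1
  rw [psComp_eq_subst χ (by rwa [Polynomial.constantCoeff_coe])] at hχ
  subst hd
  exact hdvd (Polynomial.natDegree_dvd_of_comp_mul_sub_mul_comp_eq hd2 hb hq
    (Polynomial.comp_mul_sub_mul_comp_eq hp hχ hab))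

/-- If `p(0) = 0`, `ord_{z=0} p ≥ 2`, `deg p = d ≥ 2`, `q(0) = 0`, `deg q ≥ 1` and
`d ∤ deg q`, then the power series solution `χ` with `χ(0) = 0` of
`χ(z) = χ(p(z)) + q(z)` is not a rational function. -/
theorem stmt11 (p q : Polynomial ℂ) (d : ℕ) (hp0 : p.eval 0 = 0)
    (hord : 2 ≤ p.rootMultiplicity 0)
    (hd : p.natDegree = d) (hd2 : 2 ≤ d)
    (hq0 : q.eval 0 = 0) (hq1 : 1 ≤ q.natDegree) (hdvd : ¬ d ∣ q.natDegree)
    (χ : PowerSeries ℂ) (hχ0 : constantCoeff χ = 0)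
    (hχ : χ = psComp χ (p : PowerSeries ℂ) + (q : PowerSeries ℂ)) :
    ¬ ∃ a b : Polynomial ℂ, b ≠ 0 ∧ (b : PowerSeries ℂ) * χ = (a : PowerSeries ℂ) :=
  stmt11_general p q d hp0 hd hd2 hq1 hdvd χ hχ
end
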